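/- arXiv:2207.05307 — 8 statements merged into one kernel-verified Lean document; each statement's English description precedes it below -/
import Mathlib

section
/- Let φ : ℂ^k → ℂ^m be a C¹-smooth map (in the sense of real differentiability). If F is T-nondegenerate and F(φ(F(a,b)), b) = 0 for all a, b ∈ ℂ^m, then φ(F(a,a)) = 0 for every a ∈ ℂ^m. -/
/-
Fix `a` and `y ∈ T(a)`, say `F(x,a) + F(a,y) = 0`. Along the real curve `t ↦ (a + t x, a + t y)`
the form is `F(a + t x, a + t y) = F(a,a) + t² F(x,y)`, so the hypothesis gives
`F(φ(F(a,a) + t² F(x,y)), a + t y) = 0` for all real `t`. The first argument has zero velocity at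
`t = 0`, so differentiating at `t = 0` leaves `F(φ(F(a,a)), y) = 0`. Thus `φ(F(a,a)) ∈ T(a)^F`,
which is `{0}` for generic `a`, and continuity of `a ↦ φ(F(a,a))` extends this to every `a`.
-/

open Matrix Complex

/-- The standard Hermitian inner product on `ℂ^m`: `⟪a,b⟫ = ∑ l, a l * conj (b l)`. -/
noncomputable def hermInner {m : ℕ} (a b : Fin m → ℂ) : ℂ :=
  ∑ l, a l * (starRingEnd ℂ) (b l)

/-- The `ℂ^k`-valued Hermitian form `F(z,ζ) = (⟪A₁ z, ζ⟫, …, ⟪A_k z, ζ⟫)`. -/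
noncomputable def Fform {m k : ℕ} (A : Fin k → Matrix (Fin m) (Fin m) ℂ)
    (z ζ : Fin m → ℂ) : Fin k → ℂ :=
  fun j => hermInner ((A j).mulVec z) ζ

/-- The orthogonal complement `S^F` of a set `S ⊆ ℂ^m`. -/
noncomputable def orthF {m k : ℕ} (A : Fin k → Matrix (Fin m) (Fin m) ℂ)
    (S : Set (Fin m → ℂ)) : Set (Fin m → ℂ) :=
  {x | ∀ y ∈ S, Fform A x y = 0}

/-- The subspace `T(a,b) = {y : ∃ x, F(x,b) + F(a,y) = 0}`. -/
noncomputable def Tspace {m k : ℕ} (A : Fin k → Matrix (Fin m) (Fin m) ℂ)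
    (a b : Fin m → ℂ) : Set (Fin m → ℂ) :=
  {y | ∃ x, Fform A x b + Fform A a y = 0}

/-- `F` is nondegenerate: the `A_j` are `ℝ`-linearly independent, and
`F(z,ζ) = 0` for all `z` implies `ζ = 0`. -/
noncomputable def FNondeg {m k : ℕ} (A : Fin k → Matrix (Fin m) (Fin m) ℂ) : Prop :=
  LinearIndependent ℝ A ∧ ∀ ζ : Fin m → ℂ, (∀ z : Fin m → ℂ, Fform A z ζ = 0) → ζ = 0

/-- `F` is T-nondegenerate: for generic `a ∈ ℂ^m`, `T(a)^F = {0}`. -/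
noncomputable def TNondeg {m k : ℕ} (A : Fin k → Matrix (Fin m) (Fin m) ℂ) : Prop :=
  ∃ U : Set (Fin m → ℂ), IsOpen U ∧ Dense U ∧
    ∀ a ∈ U, orthF A (Tspace A a a) = {0}

lemma Fform_apply_eq_dotProduct {m k : ℕ} (A : Fin k → Matrix (Fin m) (Fin m) ℂ)
    (z ζ : Fin m → ℂ) (j : Fin k) : Fform A z ζ j = (A j *ᵥ z) ⬝ᵥ star ζ := rfl

lemma isBilinearMap_Fform {m k : ℕ} (A : Fin k → Matrix (Fin m) (Fin m) ℂ) :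
    IsBilinearMap ℝ (Fform A) where
  add_left _ _ _ := funext fun _ => by
    simp only [Fform_apply_eq_dotProduct, mulVec_add, add_dotProduct, Pi.add_apply]
  smul_left _ _ _ := funext fun _ => by
    simp only [Fform_apply_eq_dotProduct, mulVec_smul, smul_dotProduct, Pi.smul_apply]
  add_right _ _ _ := funext fun _ => by
    simp only [Fform_apply_eq_dotProduct, star_add, dotProduct_add, Pi.add_apply]
  smul_right _ _ _ := funext fun _ => by
    simp only [Fform_apply_eq_dotProduct, star_smul, star_trivial, dotProduct_smul, Pi.smul_apply]

section

variable {E G : Type*} [NormedAddCommGroup E] [NormedSpace ℝ E]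
  [NormedAddCommGroup G] [NormedSpace ℝ G]

lemma ContinuousLinearMap.bilinear_add_smul_add_smul (B : E →L[ℝ] E →L[ℝ] G) (a x y : E)
    (t : ℝ) :
    B (a + t • x) (a + t • y) = B a a + t • (B x a + B a y) + (t * t) • B x y := by
  simp only [map_add, map_smul, _root_.add_apply, _root_.smul_apply, smul_add, mul_smul]
  abel

theorem ContinuousLinearMap.apply_map_apply_self_eq_zero (B : E →L[ℝ] E →L[ℝ] G) {φ : G → E}
    {a x y : E} (hφ : DifferentiableAt ℝ φ (B a a)) (h : ∀ a b, B (φ (B a b)) b = 0)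
    (hxy : B x a + B a y = 0) : B (φ (B a a)) y = 0 := by
  set u : ℝ → E := fun t => φ (B a a + (t * t) • B x y)
  have hcurve : ∀ t : ℝ, B (u t) (a + t • y) = 0 := fun t => by
    simpa only [B.bilinear_add_smul_add_smul, hxy, smul_zero, add_zero] using
      h (a + t • x) (a + t • y)
  have hu : HasDerivAt u 0 0 := by
    have hsq : HasDerivAt (fun t : ℝ => B a a + (t * t) • B x y) 0 0 := by
      simpa using
        (((hasDerivAt_id (0 : ℝ)).mul (hasDerivAt_id 0)).smul_const (B x y)).const_add (B a a)
    simpa [u, Function.comp_def] using hφ.hasFDerivAt.comp_hasDerivAt_of_eq 0 hsq (by simp)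
  have hv : HasDerivAt (fun t : ℝ => a + t • y) y 0 := by
    simpa using ((hasDerivAt_id (0 : ℝ)).smul_const y).const_add a
  have hB := B.hasDerivAt_of_bilinear (fun _ => hu) (fun _ => hv)
  simp only [hcurve] at hB
  simpa [u] using hB.unique (hasDerivAt_const 0 0)

end

lemma continuous_Fform_self {m k : ℕ} (A : Fin k → Matrix (Fin m) (Fin m) ℂ) :
    Continuous fun a => Fform A a a :=
  (isBilinearMap_Fform A).toContinuousBilinearMap.continuous.clm_apply continuous_id

lemma map_Fform_self_mem_orthF_Tspace {m k : ℕ} (A : Fin k → Matrix (Fin m) (Fin m) ℂ)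
    {φ : (Fin k → ℂ) → (Fin m → ℂ)} (h : ∀ a b : Fin m → ℂ, Fform A (φ (Fform A a b)) b = 0)
    (a : Fin m → ℂ) (hφ : DifferentiableAt ℝ φ (Fform A a a)) :
    φ (Fform A a a) ∈ orthF A (Tspace A a a) := by
  rintro y ⟨x, hxy⟩
  exact (isBilinearMap_Fform A).toContinuousBilinearMap.apply_map_apply_self_eq_zero hφ h hxy

theorem stmt2_general {m k : ℕ}
    (A : Fin k → Matrix (Fin m) (Fin m) ℂ)
    (hT : TNondeg A)
    (φ : (Fin k → ℂ) → (Fin m → ℂ)) (hφ : ContDiff ℝ 1 φ)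
    (h : ∀ a b : Fin m → ℂ, Fform A (φ (Fform A a b)) b = 0) :
    ∀ a : Fin m → ℂ, φ (Fform A a a) = 0 := by
  obtain ⟨U, -, hUdense, hU⟩ := hT
  have hzero : Set.EqOn (fun a => φ (Fform A a a)) 0 U := fun a ha => by
    simpa [hU a ha] using
      map_Fform_self_mem_orthF_Tspace A h a (hφ.differentiable one_ne_zero).differentiableAt
  exact congrFun <| (hφ.continuous.comp (continuous_Fform_self A)).ext_on hUdense
    continuous_const hzero

theorem stmt2 {m k : ℕ} (hm : 0 < m) (hk : 0 < k)
    (A : Fin k → Matrix (Fin m) (Fin m) ℂ) (hHerm : ∀ j, (A j).IsHermitian)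
    (hT : TNondeg A)
    (φ : (Fin k → ℂ) → (Fin m → ℂ)) (hφ : ContDiff ℝ 1 φ)
    (h : ∀ a b : Fin m → ℂ, Fform A (φ (Fform A a b)) b = 0) :
    ∀ a : Fin m → ℂ, φ (Fform A a a) = 0 :=
  stmt2_general A hT φ hφ h
end

section
/- Suppose F is strongly pseudoconvex, i.e., F is nondegenerate and there exists c ∈ ℝ^k such that Σ_j c_j A_j is positive definite. Then F is T-nondegenerate. -/
open Matrix Complex

/-!
For every `a` (not just a generic one), `T(a)^F = {0}`. If `x ∈ T(a)^F`, then `F(x,a) = 0`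
because `a ∈ T(a)` (witness `-a`); by Hermitian symmetry `F(a,x) = 0`, so `x ∈ T(a)` (witness `0`)
and hence `F(x,x) = 0`. Contracting with `c` gives `x* (∑ c_j A_j) x = 0`, so `x = 0` by positive
definiteness.
-/

namespace Fform

variable {m k : ℕ} (A : Fin k → Matrix (Fin m) (Fin m) ℂ)

lemma apply_eq_dotProduct (z ζ : Fin m → ℂ) (j : Fin k) :
    Fform A z ζ j = star ζ ⬝ᵥ A j *ᵥ z :=
  dotProduct_comm _ _

@[simp]
lemma zero_left (ζ : Fin m → ℂ) : Fform A 0 ζ = 0 := by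
  funext j
  simp [apply_eq_dotProduct]

@[simp]
lemma neg_left (z ζ : Fin m → ℂ) : Fform A (-z) ζ = -Fform A z ζ := by
  funext j
  simp [apply_eq_dotProduct, mulVec_neg]

lemma conj_symm (hHerm : ∀ j, (A j).IsHermitian) (z ζ : Fin m → ℂ) :
    Fform A z ζ = star (Fform A ζ z) := by
  funext j
  simp only [Pi.star_apply, apply_eq_dotProduct]
  rw [star_dotProduct, star_mulVec, ← dotProduct_mulVec, (hHerm j).eq]

open scoped ComplexOrder in
lemma eq_zero_of_self_eq_zero {c : Fin k → ℝ} (hc : (∑ j, (c j : ℂ) • A j).PosDef)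
    {x : Fin m → ℂ} (hx : Fform A x x = 0) : x = 0 := by
  by_contra hne
  have hpos := hc.dotProduct_mulVec_pos hne
  have hzero : star x ⬝ᵥ (∑ j, (c j : ℂ) • A j) *ᵥ x = 0 := by
    simp only [sum_mulVec, dotProduct_sum, smul_mulVec, dotProduct_smul, ← apply_eq_dotProduct, hx]
    simp
  exact hpos.ne' hzero

end Fform

section Tspace

variable {m k : ℕ} (A : Fin k → Matrix (Fin m) (Fin m) ℂ)

lemma self_mem_Tspace (a : Fin m → ℂ) : a ∈ Tspace A a a :=
  ⟨-a, by simp⟩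

lemma mem_Tspace_self_of_Fform_eq_zero (hHerm : ∀ j, (A j).IsHermitian)
    {a x : Fin m → ℂ} (h : Fform A x a = 0) : x ∈ Tspace A a a :=
  ⟨0, by rw [Fform.zero_left, zero_add, Fform.conj_symm A hHerm, h, star_zero]⟩

lemma zero_mem_orthF (S : Set (Fin m → ℂ)) : 0 ∈ orthF A S :=
  fun y _ => Fform.zero_left A y

open scoped ComplexOrder in
lemma orthF_Tspace_self_eq_singleton_zero (hHerm : ∀ j, (A j).IsHermitian)
    {c : Fin k → ℝ} (hc : (∑ j, (c j : ℂ) • A j).PosDef) (a : Fin m → ℂ) :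
    orthF A (Tspace A a a) = {0} := by
  refine Set.eq_singleton_iff_unique_mem.mpr ⟨zero_mem_orthF A _, fun x hx => ?_⟩
  have hxa : Fform A x a = 0 := hx a (self_mem_Tspace A a)
  have hxx : Fform A x x = 0 := hx x (mem_Tspace_self_of_Fform_eq_zero A hHerm hxa)
  exact Fform.eq_zero_of_self_eq_zero A hc hxx

end Tspace

open scoped ComplexOrder in
theorem stmt5_general {m k : ℕ}
    (A : Fin k → Matrix (Fin m) (Fin m) ℂ) (hHerm : ∀ j, (A j).IsHermitian)
    (hspc : ∃ c : Fin k → ℝ, (∑ j, (c j : ℂ) • A j).PosDef) :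
    TNondeg A := by
  obtain ⟨c, hc⟩ := hspc
  exact ⟨Set.univ, isOpen_univ, dense_univ,
    fun a _ => orthF_Tspace_self_eq_singleton_zero A hHerm hc a⟩

open scoped ComplexOrder in
theorem stmt5 {m k : ℕ} (hm : 0 < m) (hk : 0 < k)
    (A : Fin k → Matrix (Fin m) (Fin m) ℂ) (hHerm : ∀ j, (A j).IsHermitian)
    (hnd : FNondeg A)
    (hspc : ∃ c : Fin k → ℝ, (∑ j, (c j : ℂ) • A j).PosDef) :
    TNondeg A :=
  stmt5_general A hHerm hspc
end

section
/- Suppose F is nondegenerate and there exists a ∈ ℂ^m such that the vectors A_1 a, …, A_k a are linearly independent over ℂ. Then F is T-nondegenerate. -/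
/-!
Let `V(a)` be the `k × m` matrix with rows `A_j a`, so that `F(a,y) = V(a) conj(y)`. By Hermitian
symmetry `F(x,a) = conj F(a,x)`, so when `V(a)` is onto `ℂ^k` every `y` lies in `T(a)`, and then
`T(a)^F = (ℂ^m)^F = {0}` by nondegeneracy. Independence of the `A_j a₀` gives a right inverse `W` of
`V(a₀)`; the function `a ↦ det (V(a) W)` is a holomorphic polynomial, nonzero at `a₀`, so by the
identity theorem it is nonzero on an open dense set, on which `V(a)` is still onto.
-/

open Matrix Complex

open Set Topology

theorem AnalyticAt.matrix_det {𝕜 E n : Type*} [NontriviallyNormedField 𝕜]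
    [NormedAddCommGroup E] [NormedSpace 𝕜 E] [Fintype n] [DecidableEq n]
    {f : E → Matrix n n 𝕜} {x : E} (hf : ∀ i j, AnalyticAt 𝕜 (fun y => f y i j) x) :
    AnalyticAt 𝕜 (fun y => (f y).det) x := by
  simp_rw [Matrix.det_apply']
  refine Finset.analyticAt_fun_sum _ fun σ _ => analyticAt_const.mul ?_
  exact Finset.analyticAt_fun_prod _ fun i _ => hf (σ i) i

theorem AnalyticOnNhd.dense_setOf_ne_zero {𝕜 E F : Type*} [NontriviallyNormedField 𝕜]
    [NormedAddCommGroup E] [NormedSpace 𝕜 E] [PreconnectedSpace E]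
    [NormedAddCommGroup F] [NormedSpace 𝕜 F]
    {f : E → F} (hf : AnalyticOnNhd 𝕜 f univ) {x₀ : E} (hx₀ : f x₀ ≠ 0) :
    Dense {x | f x ≠ 0} := by
  refine dense_iff_inter_open.2 fun U hU ⟨x, hx⟩ => ?_
  by_contra hempty
  have hzero : f =ᶠ[𝓝 x] 0 := by
    filter_upwards [hU.mem_nhds hx] with y hy
    by_contra hne
    exact hempty ⟨y, hy, hne⟩
  exact hx₀ (hf.eqOn_zero_of_preconnected_of_eventuallyEq_zero isPreconnected_univ
    (mem_univ x) hzero (mem_univ x₀))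

theorem Matrix.mulVec_surjective_of_det_mul_ne_zero {K ι n : Type*} [Field K] [Fintype ι]
    [DecidableEq ι] [Fintype n] {M : Matrix ι n K} (W : Matrix n ι K) (h : (M * W).det ≠ 0) :
    Function.Surjective M.mulVec := by
  refine mulVec_surjective_iff_exists_right_inverse.2 ⟨W * (M * W)⁻¹, ?_⟩
  rw [← Matrix.mul_assoc, mul_nonsing_inv _ (isUnit_iff_ne_zero.2 h)]

theorem Matrix.mulVec_surjective_of_linearIndependent_row {K ι n : Type*} [Field K] [Fintype ι]
    [Fintype n] {M : Matrix ι n K} (h : LinearIndependent K M.row) :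
    Function.Surjective M.mulVec := by
  have hrank : Module.finrank K (LinearMap.range M.mulVecLin) = Module.finrank K (ι → K) := by
    rw [← Matrix.rank, h.rank_matrix, Module.finrank_fintype_fun_eq_card]
  rw [← Matrix.coe_mulVecLin, ← LinearMap.range_eq_top]
  exact Submodule.eq_top_of_finrank_eq hrank

section

variable {m k : ℕ} (A : Fin k → Matrix (Fin m) (Fin m) ℂ)

noncomputable def Fmatrix (a : Fin m → ℂ) : Matrix (Fin k) (Fin m) ℂ :=
  Matrix.of fun j => A j *ᵥ a

theorem Fform_eq_Fmatrix_mulVec (a y : Fin m → ℂ) : Fform A a y = Fmatrix A a *ᵥ star y :=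
  rfl

theorem Fform_eq_star_Fform (hA : ∀ j, (A j).IsHermitian) (x y : Fin m → ℂ) :
    Fform A x y = star (Fform A y x) := by
  funext j
  change (A j *ᵥ x) ⬝ᵥ star y = star ((A j *ᵥ y) ⬝ᵥ star x)
  rw [← star_dotProduct_star, star_star, star_mulVec, (hA j).eq, dotProduct_comm,
    dotProduct_mulVec, dotProduct_comm]

theorem analyticOnNhd_det_Fmatrix_mul (W : Matrix (Fin m) (Fin k) ℂ) :
    AnalyticOnNhd ℂ (fun a => (Fmatrix A a * W).det) univ := by
  refine fun a _ => AnalyticAt.matrix_det fun i j => ?_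
  simp only [Fmatrix, mul_apply, of_apply, mulVec, dotProduct]
  refine Finset.analyticAt_fun_sum _ fun l _ => AnalyticAt.mul ?_ analyticAt_const
  exact Finset.analyticAt_fun_sum _ fun p _ =>
    analyticAt_const.mul (analyticAt_pi_iff.1 analyticAt_id p)

theorem Tspace_eq_univ (hA : ∀ j, (A j).IsHermitian) {a : Fin m → ℂ}
    (ha : Function.Surjective (Fmatrix A a).mulVec) : Tspace A a a = univ := by
  refine eq_univ_of_forall fun y => ?_
  obtain ⟨z, hz⟩ := ha (-star (Fform A a y))
  refine ⟨star z, ?_⟩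
  rw [Fform_eq_star_Fform A hA (star z), Fform_eq_Fmatrix_mulVec, star_star, hz, star_neg,
    star_star, neg_add_cancel]

theorem orthF_univ (hA : ∀ j, (A j).IsHermitian)
    (hnd : ∀ ζ : Fin m → ℂ, (∀ z : Fin m → ℂ, Fform A z ζ = 0) → ζ = 0) :
    orthF A univ = {0} := by
  refine eq_singleton_iff_unique_mem.2 ⟨fun y _ => ?_, fun x hx => hnd x fun z => ?_⟩
  · rw [Fform_eq_star_Fform A hA, Fform_eq_Fmatrix_mulVec, star_zero, mulVec_zero, star_zero]
  · rw [Fform_eq_star_Fform A hA, hx z (mem_univ z), star_zero]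

end

theorem stmt7_general {m k : ℕ}
    (A : Fin k → Matrix (Fin m) (Fin m) ℂ) (hHerm : ∀ j, (A j).IsHermitian)
    (hnd : FNondeg A)
    (h : ∃ a : Fin m → ℂ, LinearIndependent ℂ (fun j => (A j).mulVec a)) :
    TNondeg A := by
  obtain ⟨a₀, ha₀⟩ := h
  obtain ⟨W, hW⟩ := mulVec_surjective_iff_exists_right_inverse.1
    (mulVec_surjective_of_linearIndependent_row (M := Fmatrix A a₀) ha₀)
  have hdet := analyticOnNhd_det_Fmatrix_mul A W
  refine ⟨{a | (Fmatrix A a * W).det ≠ 0}, isOpen_ne_fun hdet.continuous continuous_const,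
    hdet.dense_setOf_ne_zero (x₀ := a₀) (by simp [hW]), fun a ha => ?_⟩
  rw [Tspace_eq_univ A hHerm (mulVec_surjective_of_det_mul_ne_zero W ha)]
  exact orthF_univ A hHerm hnd.2

theorem stmt7 {m k : ℕ} (hm : 0 < m) (hk : 0 < k)
    (A : Fin k → Matrix (Fin m) (Fin m) ℂ) (hHerm : ∀ j, (A j).IsHermitian)
    (hnd : FNondeg A)
    (h : ∃ a : Fin m → ℂ, LinearIndependent ℂ (fun j => (A j).mulVec a)) :
    TNondeg A :=
  stmt7_general A hHerm hnd h
end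

section
/- For every a ∈ ℂ^m, (a^{Re F})^{Re F} ⊆ (a^F)^F. -/
open Matrix Complex

/-- The orthogonal complement `S^{Re F}` of a set `S ⊆ ℂ^m` with respect to
the componentwise real part of `F`. -/
noncomputable def orthReF {m k : ℕ} (A : Fin k → Matrix (Fin m) (Fin m) ℂ)
    (S : Set (Fin m → ℂ)) : Set (Fin m → ℂ) :=
  {x | ∀ y ∈ S, ∀ j, (Fform A x y j).re = 0}

section

variable {m k : ℕ} (A : Fin k → Matrix (Fin m) (Fin m) ℂ)

lemma Fform_smul_left (c : ℂ) (x y : Fin m → ℂ) :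
    Fform A (c • x) y = c • Fform A x y := by
  ext j
  simp only [Fform, hermInner, Matrix.mulVec_smul, Pi.smul_apply, smul_eq_mul, Finset.mul_sum,
    mul_assoc]

lemma Fform_smul_right (c : ℂ) (x y : Fin m → ℂ) :
    Fform A x (c • y) = starRingEnd ℂ c • Fform A x y := by
  ext j
  simp only [Fform, hermInner, Pi.smul_apply, smul_eq_mul, map_mul, Finset.mul_sum]
  exact Finset.sum_congr rfl fun _ _ => by ring

lemma smul_mem_orthF {S : Set (Fin m → ℂ)} (c : ℂ) {x : Fin m → ℂ} (hx : x ∈ orthF A S) :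
    c • x ∈ orthF A S := fun y hy => by
  rw [Fform_smul_left, hx y hy, smul_zero]

lemma orthF_subset_orthReF (S : Set (Fin m → ℂ)) : orthF A S ⊆ orthReF A S :=
  fun _ hx y hy j => by rw [hx y hy]; rfl

lemma orthReF_anti {S T : Set (Fin m → ℂ)} (hST : S ⊆ T) : orthReF A T ⊆ orthReF A S :=
  fun _ hx y hy => hx y (hST hy)

lemma orthReF_eq_orthF {S : Set (Fin m → ℂ)} (hS : ∀ y ∈ S, I • y ∈ S) :
    orthReF A S = orthF A S := by
  refine Set.Subset.antisymm (fun x hx y hy => funext fun j => ?_) (orthF_subset_orthReF A S)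
  -- `Re F(x, i y) = Re (-i F(x, y)) = Im F(x, y)`
  have him := hx _ (hS y hy) j
  rw [Fform_smul_right, conj_I] at him
  refine Complex.ext (hx y hy j) ?_
  simpa using him

end

theorem stmt11_general {m k : ℕ}
    (A : Fin k → Matrix (Fin m) (Fin m) ℂ) :
    ∀ a : Fin m → ℂ,
      orthReF A (orthReF A {a}) ⊆ orthF A (orthF A {a}) := by
  intro a
  calc orthReF A (orthReF A {a}) ⊆ orthReF A (orthF A {a}) :=
        orthReF_anti A (orthF_subset_orthReF A {a})
    _ = orthF A (orthF A {a}) := orthReF_eq_orthF A fun _ hy => smul_mem_orthF A I hy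

theorem stmt11 {m k : ℕ} (hm : 0 < m) (hk : 0 < k)
    (A : Fin k → Matrix (Fin m) (Fin m) ℂ) (hHerm : ∀ j, (A j).IsHermitian) :
    ∀ a : Fin m → ℂ,
      orthReF A (orthReF A {a}) ⊆ orthF A (orthF A {a}) :=
  stmt11_general A
end

section
/- Let L be an m×m complex matrix such that ⟨La, b⟩² = ⟨a, b⟩ · ⟨L²a, b⟩ for all a, b ∈ ℂ^m. Then L = λI for some λ ∈ ℂ, i.e., L is a scalar matrix. -/
open Matrix Complex

/-!
Testing the identity on basis vectors `a = eⱼ`, `b = eᵢ` with `i ≠ j` gives `L i j ^ 2 = 0`, so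
`L` is diagonal. For a diagonal `L` and `a = b = eᵢ + eₖ` it reads
`(L i i + L k k) ^ 2 = 2 (L i i ^ 2 + L k k ^ 2)`, i.e. `(L i i - L k k) ^ 2 = 0`.
-/

lemma hermInner_add_right {m : ℕ} (v a b : Fin m → ℂ) :
    hermInner v (a + b) = hermInner v a + hermInner v b := by
  simp only [hermInner, Pi.add_apply, map_add, mul_add, Finset.sum_add_distrib]

lemma hermInner_single_right {m : ℕ} (v : Fin m → ℂ) (j : Fin m) :
    hermInner v (Pi.single j 1) = v j := by
  simp [hermInner, Pi.single_apply, mul_ite]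

lemma hermInner_single_add_single_right {m : ℕ} (v : Fin m → ℂ) (i k : Fin m) :
    hermInner v (Pi.single i 1 + Pi.single k 1) = v i + v k := by
  rw [hermInner_add_right, hermInner_single_right, hermInner_single_right]

lemma isDiag_of_hermInner_sq_eq {m : ℕ} (L : Matrix (Fin m) (Fin m) ℂ)
    (h : ∀ a b : Fin m → ℂ,
      (hermInner (L.mulVec a) b) ^ 2 = hermInner a b * hermInner ((L * L).mulVec a) b) :
    L.IsDiag := by
  intro i j hij
  have hij' := h (Pi.single j 1) (Pi.single i 1)
  simp only [hermInner_single_right, mulVec_single_one, col_apply,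
    Pi.single_eq_of_ne hij, zero_mul] at hij'
  exact pow_eq_zero_iff two_ne_zero |>.mp hij'

lemma diagonal_entries_eq_of_hermInner_sq_eq {m : ℕ} (d : Fin m → ℂ)
    (h : ∀ a b : Fin m → ℂ, (hermInner ((diagonal d).mulVec a) b) ^ 2 =
      hermInner a b * hermInner ((diagonal d * diagonal d).mulVec a) b)
    (i k : Fin m) : d i = d k := by
  rcases eq_or_ne i k with rfl | hik
  · rfl
  have hik' := h (Pi.single i 1 + Pi.single k 1) (Pi.single i 1 + Pi.single k 1)
  simp only [hermInner_single_add_single_right, diagonal_mul_diagonal, mulVec_diagonal,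
    Pi.add_apply, Pi.single_eq_same, Pi.single_eq_of_ne hik, Pi.single_eq_of_ne hik.symm,
    mul_add, mul_one, add_zero, zero_add] at hik'
  have hsq : (d i - d k) ^ 2 = 0 := by linear_combination -hik'
  exact sub_eq_zero.mp (pow_eq_zero_iff two_ne_zero |>.mp hsq)

lemma exists_diagonal_eq_smul_one {n α : Type*} [DecidableEq n] [Semiring α] (d : n → α)
    (hd : ∀ i j, d i = d j) : ∃ c : α, diagonal d = c • (1 : Matrix n n α) := by
  rcases isEmpty_or_nonempty n with hn | ⟨⟨i⟩⟩
  · exact ⟨0, Subsingleton.elim _ _⟩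
  · refine ⟨d i, ?_⟩
    rw [smul_one_eq_diagonal]
    exact congrArg diagonal (funext fun j => hd j i)

theorem stmt15_general {m : ℕ} (L : Matrix (Fin m) (Fin m) ℂ)
    (h : ∀ a b : Fin m → ℂ,
      (hermInner (L.mulVec a) b) ^ 2 = hermInner a b * hermInner ((L * L).mulVec a) b) :
    ∃ lam : ℂ, L = lam • (1 : Matrix (Fin m) (Fin m) ℂ) := by
  have hL : diagonal L.diag = L := (isDiag_of_hermInner_sq_eq L h).diagonal_diag
  rw [← hL] at h ⊢
  exact exists_diagonal_eq_smul_one _ (diagonal_entries_eq_of_hermInner_sq_eq _ h)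

theorem stmt15 {m : ℕ} (hm : 0 < m) (L : Matrix (Fin m) (Fin m) ℂ)
    (h : ∀ a b : Fin m → ℂ,
      (hermInner (L.mulVec a) b) ^ 2 = hermInner a b * hermInner ((L * L).mulVec a) b) :
    ∃ lam : ℂ, L = lam • (1 : Matrix (Fin m) (Fin m) ℂ) :=
  stmt15_general L h
end

section
/- Let A and B be m×m complex Hermitian matrices that are linearly independent over ℝ. Then there is an open dense subset U ⊆ ℂ^m such that for every a ∈ U the vectors Aa and Ba are linearly independent over ℂ. -/
open Matrix Complex ComplexConjugate

/-!
The set of `a` with `A a`, `B a` independent is open, and it contains the nonvanishing locus of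
a `2 × 2` minor of `[A a | B a]`, a polynomial in `a`; by the identity theorem it is therefore
dense as soon as it is nonempty. If it were empty, `A` and `B` would be locally linearly
dependent. Then either `A` has rank at least two, which forces `B = c • A`, or the ranges of `A`
and `B` lie on one line `ℂ x`, and hermiticity makes both of them multiples of `x xᴴ`. In both
cases `A` and `B` are `ℂ`-dependent, and a `ℂ`-relation between Hermitian matrices splits,
through its conjugate transpose, into `ℝ`-relations given by its real and imaginary parts.
-/

def LocallyLinearlyDependent {K V W : Type*} [Field K] [AddCommGroup V] [Module K V]
    [AddCommGroup W] [Module K W] (f g : V →ₗ[K] W) : Prop :=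
  ∀ v, ¬ LinearIndependent K ![f v, g v]

namespace LocallyLinearlyDependent

variable {K V W : Type*} [Field K] [AddCommGroup V] [Module K V] [AddCommGroup W] [Module K W]
  {f g : V →ₗ[K] W}

theorem exists_apply_eq_smul (hfg : LocallyLinearlyDependent f g) {v : V} (hv : f v ≠ 0) :
    ∃ c : K, g v = c • f v := by
  obtain ⟨c, hc⟩ : ∃ c : K, c • f v = g v := by
    simpa [LinearIndependent.pair_iff' hv] using hfg v
  exact ⟨c, hc.symm⟩

theorem apply_eq_smul_of_linearIndependent (hfg : LocallyLinearlyDependent f g) {u v : V}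
    (huv : LinearIndependent K ![f u, f v]) {a : K} (hu : g u = a • f u) : g v = a • f v := by
  have hsum : f (u + v) ≠ 0 := by
    rw [map_add]
    intro h
    simpa using LinearIndependent.pair_iff.1 huv 1 1 (by simpa using h)
  obtain ⟨b, hv⟩ := hfg.exists_apply_eq_smul (by simpa using huv.ne_zero 1)
  obtain ⟨c, huv'⟩ := hfg.exists_apply_eq_smul hsum
  rw [map_add, map_add, hu, hv] at huv'
  obtain ⟨hac, hbc⟩ := LinearIndependent.pair_iff.1 huv (a - c) (b - c) (by
    linear_combination (norm := module) huv')
  rw [hv, sub_eq_zero.1 hbc, ← sub_eq_zero.1 hac]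

theorem exists_eq_smul_of_linearIndependent (hfg : LocallyLinearlyDependent f g) {u w : V}
    (huw : LinearIndependent K ![f u, f w]) : ∃ a : K, g = a • f := by
  have hu0 : f u ≠ 0 := by simpa using huw.ne_zero 0
  obtain ⟨a, hu⟩ := hfg.exists_apply_eq_smul hu0
  have hw : g w = a • f w := hfg.apply_eq_smul_of_linearIndependent huw hu
  refine ⟨a, LinearMap.ext fun v => ?_⟩
  by_cases huv : LinearIndependent K ![f u, f v]
  · exact hfg.apply_eq_smul_of_linearIndependent huv hu
  -- `f v` is a multiple of `f u`, so `f (v + w)` is still independent of `f u`.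
  obtain ⟨c, hc⟩ : ∃ c : K, c • f u = f v := by
    simpa [LinearIndependent.pair_iff' hu0] using huv
  have huvw : LinearIndependent K ![f u, f (v + w)] := by
    rwa [map_add, ← hc, LinearIndependent.pair_add_smul_right_iff]
  have hvw := hfg.apply_eq_smul_of_linearIndependent huvw hu
  rw [map_add, map_add, hw, smul_add] at hvw
  simpa using add_right_cancel hvw

theorem range_le_range (hfg : LocallyLinearlyDependent f g) (hf : f ≠ 0) :
    LinearMap.range g ≤ LinearMap.range f := by
  obtain ⟨v₀, hv₀⟩ : ∃ v₀, f v₀ ≠ 0 := by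
    by_contra! h
    exact hf (LinearMap.ext h)
  have hmem : ∀ v, f v ≠ 0 → g v ∈ LinearMap.range f := fun v hv => by
    obtain ⟨c, hc⟩ := hfg.exists_apply_eq_smul hv
    exact ⟨c • v, by rw [map_smul, hc]⟩
  rintro _ ⟨v, rfl⟩
  by_cases hv : f v = 0
  · simpa using sub_mem (hmem (v₀ + v) (by rwa [map_add, hv, add_zero])) (hmem v₀ hv₀)
  · exact hmem v hv

end LocallyLinearlyDependent

theorem linearIndependent_pair_iff_exists_mul_sub_mul_ne_zero {K ι : Type*} [Field K]
    {x y : ι → K} : LinearIndependent K ![x, y] ↔ ∃ i j, x i * y j - x j * y i ≠ 0 := by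
  constructor
  · intro h
    by_contra! hminor
    have hx : x ≠ 0 := by simpa using h.ne_zero 0
    obtain ⟨i, hi⟩ : ∃ i, x i ≠ 0 := Function.ne_iff.1 hx
    have := LinearIndependent.pair_iff.1 h (y i) (-x i) (by
      funext j
      simp only [Pi.add_apply, Pi.smul_apply, smul_eq_mul, Pi.zero_apply, neg_mul]
      linear_combination hminor j i)
    exact hi (neg_eq_zero.1 this.2)
  · rintro ⟨i, j, hij⟩
    refine LinearIndependent.pair_iff.2 fun s t hst => ?_
    have hi : s * x i + t * y i = 0 := by simpa using congrFun hst i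
    have hj : s * x j + t * y j = 0 := by simpa using congrFun hst j
    refine ⟨(mul_eq_zero.1 ?_).resolve_right hij, (mul_eq_zero.1 ?_).resolve_right hij⟩
    · linear_combination y j * hi - y i * hj
    · linear_combination x i * hj - x j * hi

theorem dense_setOf_ne_zero_of_analyticOnNhd {𝕜 E F : Type*} [NontriviallyNormedField 𝕜]
    [NormedAddCommGroup E] [NormedSpace 𝕜 E] [PreconnectedSpace E]
    [NormedAddCommGroup F] [NormedSpace 𝕜 F] {φ : E → F}
    (hφ : AnalyticOnNhd 𝕜 φ Set.univ) (h : φ ≠ 0) : Dense {x | φ x ≠ 0} := by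
  refine dense_iff_inter_open.2 fun U hU ⟨z, hz⟩ => ?_
  by_contra hempty
  refine h (funext fun x => hφ.eqOn_zero_of_preconnected_of_eventuallyEq_zero isPreconnected_univ
    (Set.mem_univ z) ?_ (Set.mem_univ x))
  filter_upwards [hU.mem_nhds hz] with y hy
  by_contra hy'
  exact hempty ⟨y, hy, hy'⟩

theorem dense_setOf_linearIndependent_pair {𝕜 E ι : Type*} [NontriviallyNormedField 𝕜]
    [CompleteSpace 𝕜] [NormedAddCommGroup E] [NormedSpace 𝕜 E] [FiniteDimensional 𝕜 E]
    [PreconnectedSpace E] [Fintype ι] (f g : E →ₗ[𝕜] ι → 𝕜)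
    (h : ∃ v, LinearIndependent 𝕜 ![f v, g v]) :
    Dense {a | LinearIndependent 𝕜 ![f a, g a]} := by
  obtain ⟨v, hv⟩ := h
  obtain ⟨i, j, hij⟩ := linearIndependent_pair_iff_exists_mul_sub_mul_ne_zero.1 hv
  have hcoord : ∀ (h : E →ₗ[𝕜] ι → 𝕜) k, AnalyticOnNhd 𝕜 (fun a => h a k) Set.univ :=
    fun h k a _ => (ContinuousLinearMap.proj k ∘L LinearMap.toContinuousLinearMap h).analyticAt a
  have hminor : AnalyticOnNhd 𝕜 (fun a => f a i * g a j - f a j * g a i) Set.univ :=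
    ((hcoord f i).mul (hcoord g j)).sub ((hcoord f j).mul (hcoord g i))
  exact (dense_setOf_ne_zero_of_analyticOnNhd hminor fun h0 => hij (congrFun h0 v)).mono
    fun a ha => linearIndependent_pair_iff_exists_mul_sub_mul_ne_zero.2 ⟨i, j, ha⟩

namespace Matrix.IsHermitian

theorem linearIndependent_complex_of_linearIndependent_real {n : Type*} {A B : Matrix n n ℂ}
    (hA : A.IsHermitian) (hB : B.IsHermitian) (h : LinearIndependent ℝ ![A, B]) :
    LinearIndependent ℂ ![A, B] := by
  rw [LinearIndependent.pair_iff] at h ⊢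
  intro s t hst
  have hconj : conj s • A + conj t • B = 0 := by
    simpa [conjTranspose_add, conjTranspose_smul, hA.eq, hB.eq] using congrArg (·ᴴ) hst
  have hre := h s.re t.re (by
    rw [← Complex.coe_smul, ← Complex.coe_smul, Complex.re_eq_add_conj, Complex.re_eq_add_conj]
    linear_combination (norm := module) (1 / 2 : ℂ) • hst + (1 / 2 : ℂ) • hconj)
  have him := h s.im t.im (by
    rw [← Complex.coe_smul, ← Complex.coe_smul, Complex.im_eq_sub_conj, Complex.im_eq_sub_conj]
    linear_combination (norm := module) (1 / (2 * I)) • hst - (1 / (2 * I)) • hconj)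
  exact ⟨Complex.ext hre.1 him.1, Complex.ext hre.2 him.2⟩

theorem exists_eq_smul_vecMulVec {n K : Type*} [Fintype n] [DecidableEq n] [Field K]
    [StarRing K] {A : Matrix n n K} (hA : A.IsHermitian) {x : n → K} (hx : x ≠ 0)
    (h : LinearMap.range (toLin' A) ≤ K ∙ x) : ∃ a : K, A = a • vecMulVec x (star x) := by
  have hcol : ∀ j, ∃ c : K, c • x = A *ᵥ Pi.single j 1 := fun j =>
    Submodule.mem_span_singleton.1 (h ⟨Pi.single j 1, by simp⟩)
  choose c hc using hcol
  have hentry : ∀ i j, A i j = c j * x i := fun i j => by simpa using (congrFun (hc j) i).symm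
  obtain ⟨i₀, hi₀⟩ : ∃ i, x i ≠ 0 := Function.ne_iff.1 hx
  refine ⟨star (c i₀) / x i₀, Matrix.ext fun i j => ?_⟩
  have hsym : c j * x i₀ = star (c i₀) * star (x j) := by
    rw [← hentry, ← hA.apply, hentry, star_mul']
  rw [hentry, smul_apply, vecMulVec_apply, smul_eq_mul, Pi.star_apply]
  field_simp
  linear_combination x i * hsym

theorem exists_linearIndependent_mulVec_pair {n : Type*} [Fintype n] [DecidableEq n]
    {A B : Matrix n n ℂ} (hA : A.IsHermitian) (hB : B.IsHermitian)
    (hAB : LinearIndependent ℂ ![A, B]) : ∃ v, LinearIndependent ℂ ![A *ᵥ v, B *ᵥ v] := by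
  by_contra! hdep
  have hloc : LocallyLinearlyDependent (toLin' A) (toLin' B) := by
    simpa [LocallyLinearlyDependent] using hdep
  have hA0 : toLin' A ≠ 0 := by simpa using hAB.ne_zero 0
  obtain ⟨v₀, hv₀⟩ : ∃ v₀, A *ᵥ v₀ ≠ 0 := by
    by_contra! h
    exact hA0 (LinearMap.ext h)
  by_cases hrank : ∃ u w, LinearIndependent ℂ ![A *ᵥ u, A *ᵥ w]
  · obtain ⟨u, w, huw⟩ := hrank
    obtain ⟨c, hc⟩ := hloc.exists_eq_smul_of_linearIndependent (by simpa using huw)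
    have hBA : B = c • A := toLin'.injective (by rw [hc, map_smul])
    simpa using (LinearIndependent.pair_iff.1 hAB c (-1) (by rw [hBA]; module)).2
  push Not at hrank
  have hAx : LinearMap.range (toLin' A) ≤ ℂ ∙ (A *ᵥ v₀) := by
    rintro _ ⟨v, rfl⟩
    obtain ⟨c, hc⟩ : ∃ c : ℂ, c • A *ᵥ v₀ = A *ᵥ v := by
      simpa [LinearIndependent.pair_iff' hv₀] using hrank v₀ v
    exact Submodule.mem_span_singleton.2 ⟨c, by simpa using hc⟩
  obtain ⟨a, ha⟩ := hA.exists_eq_smul_vecMulVec hv₀ hAx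
  obtain ⟨b, hb⟩ := hB.exists_eq_smul_vecMulVec hv₀ ((hloc.range_le_range hA0).trans hAx)
  obtain ⟨-, ha0⟩ := LinearIndependent.pair_iff.1 hAB b (-a) (by rw [ha, hb]; module)
  exact hv₀ (by rw [ha, neg_eq_zero.1 ha0, zero_smul, zero_mulVec])

end Matrix.IsHermitian

theorem stmt16_general {m : ℕ} (A B : Matrix (Fin m) (Fin m) ℂ)
    (hA : A.IsHermitian) (hB : B.IsHermitian)
    (hind : ∀ α β : ℝ, (α : ℂ) • A + (β : ℂ) • B = 0 → α = 0 ∧ β = 0) :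
    ∃ U : Set (Fin m → ℂ), IsOpen U ∧ Dense U ∧
      ∀ a ∈ U, LinearIndependent ℂ ![A.mulVec a, B.mulVec a] := by
  have hAB : LinearIndependent ℝ ![A, B] :=
    LinearIndependent.pair_iff.2 fun α β h => hind α β (by simpa only [Complex.coe_smul] using h)
  obtain ⟨v, hv⟩ := hA.exists_linearIndependent_mulVec_pair hB
    (hA.linearIndependent_complex_of_linearIndependent_real hB hAB)
  refine ⟨{a | LinearIndependent ℂ ![A *ᵥ a, B *ᵥ a]}, ?_, ?_, fun a ha => ha⟩
  · exact isOpen_setOfPred_linearIndependent.preimage (by fun_prop)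
  · simpa using
      dense_setOf_linearIndependent_pair (toLin' A) (toLin' B) ⟨v, by simpa using hv⟩

theorem stmt16 {m : ℕ} (hm : 0 < m) (A B : Matrix (Fin m) (Fin m) ℂ)
    (hA : A.IsHermitian) (hB : B.IsHermitian)
    (hind : ∀ α β : ℝ, (α : ℂ) • A + (β : ℂ) • B = 0 → α = 0 ∧ β = 0) :
    ∃ U : Set (Fin m → ℂ), IsOpen U ∧ Dense U ∧
      ∀ a ∈ U, LinearIndependent ℂ ![A.mulVec a, B.mulVec a] :=
  stmt16_general A B hA hB hind
end

section
/- Let A be an invertible m×m complex Hermitian matrix and let B be an m×m complex Hermitian matrix such that ⟨Ba, a⟩² = ⟨Aa, a⟩ · ⟨B A^{-1} B a, a⟩ for all a ∈ ℂ^m. Then B = λA for some λ ∈ ℂ. -/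
open Matrix Complex

/-! Write `Q_M x = x⋆ M x`, so that the hypothesis reads `Q_B² = Q_A Q_C` with `C = B A⁻¹ B`.
Substituting `x = a + t b` turns it into an identity between polynomials in `t` and `t̄`;
comparing the coefficients of `t̄²` polarizes it to `(b⋆ B a)² = (b⋆ A a) (b⋆ C a)` for all
`a, b`. For fixed `a`, the linear forms `c ↦ c ⬝ Ba` and `c ↦ c ⬝ Aa` then have nested kernels,
so `Ba ∥ Aa`. Hence every vector is an eigenvector of `B A⁻¹`, which is therefore a scalar. -/

open scoped ComplexConjugate

theorem hermInner_eq_star_dotProduct {m : ℕ} (x y : Fin m → ℂ) : hermInner x y = star y ⬝ᵥ x :=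
  Finset.sum_congr rfl fun _ _ => mul_comm _ _

-- The five-point stencil `(-f 2 + 16 f 1 - 30 f 0 + 16 f (-1) - f (-2)) / 24` is exact for the
-- coefficient of `k²` of a quartic.
theorem coeff_two_eq_of_forall_int_sq_eq_mul {K : Type*} [Field K] [CharZero K]
    {p u s p' u' s' p'' u'' s'' : K}
    (h : ∀ k : ℤ, (p + k * u + k ^ 2 * s) ^ 2
      = (p' + k * u' + k ^ 2 * s') * (p'' + k * u'' + k ^ 2 * s'')) :
    u ^ 2 + 2 * p * s = u' * u'' + p' * s'' + s' * p'' := by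
  have e0 := h 0
  have e1 := h 1
  have e2 := h 2
  have e1' := h (-1)
  have e2' := h (-2)
  push_cast at e0 e1 e2 e1' e2'
  linear_combination (-e2 + 16 * e1 - 30 * e0 + 16 * e1' - e2') / 24

theorem eq_zero_of_forall_sq_add_mul_conj_add_conj_sq {X Y Z : ℂ}
    (h : ∀ τ : ℂ, τ ^ 2 * X + τ * conj τ * Y + conj τ ^ 2 * Z = 0) : Z = 0 := by
  have e1 := h 1
  have ei := h I
  have e := h (1 + I)
  simp only [map_one, conj_I, map_add] at e1 ei e
  linear_combination (e1 - ei) / 4 + I / 4 * (e - e1 - ei) + (3 * Z - X - Y) / 4 * I_sq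

theorem conjCoeff_sq_eq_mul_of_forall_sq_eq_mul {p q r s p' q' r' s' p'' q'' r'' s'' : ℂ}
    (h : ∀ t : ℂ, (p + t * q + conj t * r + conj t * t * s) ^ 2
      = (p' + t * q' + conj t * r' + conj t * t * s')
        * (p'' + t * q'' + conj t * r'' + conj t * t * s'')) :
    r ^ 2 = r' * r'' := by
  -- Along `t = k τ` with `k ∈ ℤ`, the coefficient of `k²` is `τ² X + τ τ̄ Y + τ̄² Z`.
  suffices hZ : r ^ 2 - r' * r'' = 0 from sub_eq_zero.mp hZ
  refine eq_zero_of_forall_sq_add_mul_conj_add_conj_sq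
    (X := q ^ 2 - q' * q'')
    (Y := 2 * q * r + 2 * p * s - (q' * r'' + r' * q'' + p' * s'' + s' * p'')) fun τ => ?_
  have hcoeff := coeff_two_eq_of_forall_int_sq_eq_mul (p := p) (u := τ * q + conj τ * r)
    (s := conj τ * τ * s) (p' := p') (u' := τ * q' + conj τ * r') (s' := conj τ * τ * s')
    (p'' := p'') (u'' := τ * q'' + conj τ * r'') (s'' := conj τ * τ * s'') fun k => by
      have hk := h (k * τ)
      simp only [map_mul, map_intCast] at hk
      linear_combination hk
  linear_combination hcoeff

theorem LinearMap.exists_eq_smul_of_sq_eq_mul {K E : Type*} [Field K] [AddCommGroup E]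
    [Module K E] {f g h : E →ₗ[K] K} (hfgh : ∀ x, f x ^ 2 = g x * h x) :
    ∃ c : K, f = c • g := by
  have hker : ⨅ _ : Unit, LinearMap.ker g ≤ LinearMap.ker f := fun x hx => by
    have hgx : g x = 0 := by simpa using hx
    simpa [hgx] using hfgh x
  have hf : f ∈ Submodule.span K {g} := by
    simpa using mem_span_of_iInf_ker_le_ker hker
  obtain ⟨c, hc⟩ := Submodule.mem_span_singleton.mp hf
  exact ⟨c, hc.symm⟩

section Polarization

variable {n : Type*} [Fintype n]

theorem star_add_smul_dotProduct_mulVec (M : Matrix n n ℂ) (a b : n → ℂ) (t : ℂ) :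
    star (a + t • b) ⬝ᵥ M *ᵥ (a + t • b)
      = star a ⬝ᵥ M *ᵥ a + t * (star a ⬝ᵥ M *ᵥ b) + conj t * (star b ⬝ᵥ M *ᵥ a)
        + conj t * t * (star b ⬝ᵥ M *ᵥ b) := by
  simp only [mulVec_add, mulVec_smul, star_add, star_smul, dotProduct_add, add_dotProduct,
    smul_dotProduct, dotProduct_smul, smul_eq_mul, starRingEnd_apply]
  ring

theorem sq_star_dotProduct_mulVec_eq_mul {A B C : Matrix n n ℂ}
    (h : ∀ x : n → ℂ,
      (star x ⬝ᵥ B *ᵥ x) ^ 2 = (star x ⬝ᵥ A *ᵥ x) * (star x ⬝ᵥ C *ᵥ x))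
    (a b : n → ℂ) :
    (star b ⬝ᵥ B *ᵥ a) ^ 2 = (star b ⬝ᵥ A *ᵥ a) * (star b ⬝ᵥ C *ᵥ a) :=
  conjCoeff_sq_eq_mul_of_forall_sq_eq_mul fun t => by
    simpa only [star_add_smul_dotProduct_mulVec] using h (a + t • b)

theorem exists_mulVec_eq_smul_mulVec [DecidableEq n] {A B C : Matrix n n ℂ}
    (h : ∀ x : n → ℂ,
      (star x ⬝ᵥ B *ᵥ x) ^ 2 = (star x ⬝ᵥ A *ᵥ x) * (star x ⬝ᵥ C *ᵥ x))
    (a : n → ℂ) : ∃ k : ℂ, B *ᵥ a = k • A *ᵥ a := by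
  obtain ⟨k, hk⟩ := LinearMap.exists_eq_smul_of_sq_eq_mul
    (f := dotProductEquiv ℂ n (B *ᵥ a)) (g := dotProductEquiv ℂ n (A *ᵥ a))
    (h := dotProductEquiv ℂ n (C *ᵥ a)) fun c => by
      simpa only [dotProductEquiv_apply_apply, star_star, dotProduct_comm c]
        using sq_star_dotProduct_mulVec_eq_mul h a (star c)
  exact ⟨k, (dotProductEquiv ℂ n).injective (by rw [hk, map_smul])⟩

end Polarization

namespace Matrix

variable {K n : Type*} [Field K] [Fintype n] [DecidableEq n]

theorem exists_eq_smul_one_of_forall_mulVec_eq_smul {M : Matrix n n K}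
    (h : ∀ v, ∃ k : K, M *ᵥ v = k • v) : ∃ c : K, M = c • 1 := by
  obtain ⟨c, hc⟩ := (toLin' M).exists_eq_smul_id_of_forall_notLinearIndependent fun v => by
    obtain ⟨k, hk⟩ := h v
    rw [LinearIndependent.pair_iff]
    intro hli
    exact neg_ne_zero.mpr one_ne_zero (hli k (-1) (by simp [hk])).2
  refine ⟨c, toLin'.injective ?_⟩
  rw [hc, map_smul, toLin'_one]
  rfl

theorem exists_eq_smul_of_forall_mulVec_eq_smul_mulVec {A B : Matrix n n K} (hA : IsUnit A)
    (h : ∀ v, ∃ k : K, B *ᵥ v = k • A *ᵥ v) : ∃ c : K, B = c • A := by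
  have hdet : IsUnit A.det := (isUnit_iff_isUnit_det A).mp hA
  obtain ⟨c, hc⟩ := exists_eq_smul_one_of_forall_mulVec_eq_smul (M := B * A⁻¹) fun v => by
    obtain ⟨k, hk⟩ := h (A⁻¹ *ᵥ v)
    refine ⟨k, ?_⟩
    rw [← mulVec_mulVec, hk, mulVec_mulVec, mul_nonsing_inv A hdet, one_mulVec]
  refine ⟨c, ?_⟩
  calc B = B * A⁻¹ * A := by rw [mul_assoc, nonsing_inv_mul A hdet, mul_one]
    _ = c • A := by rw [hc, smul_mul_assoc, one_mul]

end Matrix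

theorem stmt17_general {m : ℕ} (A B : Matrix (Fin m) (Fin m) ℂ)
    (hAinv : IsUnit A)
    (h : ∀ a : Fin m → ℂ,
      (hermInner (B.mulVec a) a) ^ 2
        = hermInner (A.mulVec a) a * hermInner ((B * A⁻¹ * B).mulVec a) a) :
    ∃ lam : ℂ, B = lam • A := by
  simp only [hermInner_eq_star_dotProduct] at h
  exact exists_eq_smul_of_forall_mulVec_eq_smul_mulVec hAinv (exists_mulVec_eq_smul_mulVec h)

theorem stmt17 {m : ℕ} (hm : 0 < m) (A B : Matrix (Fin m) (Fin m) ℂ)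
    (hA : A.IsHermitian) (hAinv : IsUnit A) (hB : B.IsHermitian)
    (h : ∀ a : Fin m → ℂ,
      (hermInner (B.mulVec a) a) ^ 2
        = hermInner (A.mulVec a) a * hermInner ((B * A⁻¹ * B).mulVec a) a) :
    ∃ lam : ℂ, B = lam • A :=
  stmt17_general A B hAinv h
end

section
/- Suppose k = 3 and F = (F₁, F₂, F₃) is nondegenerate, and suppose that for generic a ∈ ℂ^m (i.e., for all a in some open dense subset of ℂ^m) the vector A₃a lies in the ℂ-linear span of A₁a and A₂a. Then the ℂ²-valued Hermitian form F' = (F₁, F₂), defined by the matrices A₁ and A₂, is nondegenerate. -/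
open Matrix Complex

/-!
The forms `⟪A z, ζ⟫` are continuous and `ℂ`-linear in `z`. If `ζ` is `F'`-orthogonal to
everything, then `⟪A₃ a, ζ⟫` vanishes whenever `A₃ a` lies in the span of `A₁ a, A₂ a`, i.e. on
a dense set, hence everywhere; nondegeneracy of `F` then forces `ζ = 0`.
-/

section HermitianForm

variable {m k : ℕ}

theorem hermInner_eq_dotProduct (a b : Fin m → ℂ) : hermInner a b = a ⬝ᵥ star b := rfl

theorem hermInner_eq_zero_of_mem_span {S : Set (Fin m → ℂ)} {ζ w : Fin m → ℂ}
    (hS : ∀ v ∈ S, hermInner v ζ = 0) (hw : w ∈ Submodule.span ℂ S) : hermInner w ζ = 0 := by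
  induction hw using Submodule.span_induction with
  | mem v hv => exact hS v hv
  | zero => simp [hermInner_eq_dotProduct]
  | add v w _ _ hv hw => simp only [hermInner_eq_dotProduct, add_dotProduct] at *; simp [hv, hw]
  | smul c v _ hv => simp only [hermInner_eq_dotProduct, smul_dotProduct] at *; simp [hv]

theorem continuous_hermInner_mulVec (M : Matrix (Fin m) (Fin m) ℂ) (ζ : Fin m → ℂ) :
    Continuous fun a => hermInner (M *ᵥ a) ζ := by
  simp only [hermInner, mulVec, dotProduct]
  fun_prop

theorem Fform_eq_zero_iff (A : Fin k → Matrix (Fin m) (Fin m) ℂ) (z ζ : Fin m → ℂ) :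
    Fform A z ζ = 0 ↔ ∀ j, hermInner (A j *ᵥ z) ζ = 0 :=
  funext_iff

theorem hermInner_mulVec_eq_zero_of_dense_mem_span (A : Fin k → Matrix (Fin m) (Fin m) ℂ)
    (B : Matrix (Fin m) (Fin m) ℂ) {U : Set (Fin m → ℂ)} (hU : Dense U)
    (hB : ∀ a ∈ U, B *ᵥ a ∈ Submodule.span ℂ (Set.range fun j => A j *ᵥ a))
    {ζ : Fin m → ℂ} (hζ : ∀ z, Fform A z ζ = 0) (z : Fin m → ℂ) :
    hermInner (B *ᵥ z) ζ = 0 := by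
  have hzero_on_U : Set.EqOn (fun a => hermInner (B *ᵥ a) ζ) 0 U := fun a ha =>
    hermInner_eq_zero_of_mem_span
      (by rintro _ ⟨j, rfl⟩; exact (Fform_eq_zero_iff A a ζ).1 (hζ a) j) (hB a ha)
  exact congrFun (Continuous.ext_on hU (continuous_hermInner_mulVec B ζ) continuous_const
    hzero_on_U) z

theorem FNondeg.castSucc_of_dense_mem_span {A : Fin (k + 1) → Matrix (Fin m) (Fin m) ℂ}
    (hnd : FNondeg A) {U : Set (Fin m → ℂ)} (hU : Dense U)
    (hlast : ∀ a ∈ U, A (Fin.last k) *ᵥ a ∈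
      Submodule.span ℂ (Set.range fun j : Fin k => A j.castSucc *ᵥ a)) :
    FNondeg (fun j : Fin k => A j.castSucc) := by
  refine ⟨hnd.1.comp _ (Fin.castSucc_injective k), fun ζ hζ => hnd.2 ζ fun z => ?_⟩
  rw [Fform_eq_zero_iff]
  intro j
  induction j using Fin.lastCases with
  | last => exact hermInner_mulVec_eq_zero_of_dense_mem_span _ _ hU hlast hζ z
  | cast j => exact (Fform_eq_zero_iff _ z ζ).1 (hζ z) j

end HermitianForm

theorem stmt18_general {m : ℕ}
    (A : Fin 3 → Matrix (Fin m) (Fin m) ℂ)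
    (hnd : FNondeg A)
    (hgen : ∃ U : Set (Fin m → ℂ), IsOpen U ∧ Dense U ∧
      ∀ a ∈ U, (A 2).mulVec a ∈
        Submodule.span ℂ ({(A 0).mulVec a, (A 1).mulVec a} : Set (Fin m → ℂ))) :
    FNondeg (fun j : Fin 2 => A j.castSucc) := by
  obtain ⟨U, -, hU, hspan⟩ := hgen
  refine hnd.castSucc_of_dense_mem_span hU fun a ha => Submodule.span_mono ?_ (hspan a ha)
  rintro _ (rfl | rfl)
  exacts [⟨0, rfl⟩, ⟨1, rfl⟩]

theorem stmt18 {m : ℕ} (hm : 0 < m)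
    (A : Fin 3 → Matrix (Fin m) (Fin m) ℂ) (hHerm : ∀ j, (A j).IsHermitian)
    (hnd : FNondeg A)
    (hgen : ∃ U : Set (Fin m → ℂ), IsOpen U ∧ Dense U ∧
      ∀ a ∈ U, (A 2).mulVec a ∈
        Submodule.span ℂ ({(A 0).mulVec a, (A 1).mulVec a} : Set (Fin m → ℂ))) :
    FNondeg (fun j : Fin 2 => A j.castSucc) :=
  stmt18_general A hnd hgen
end
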